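/- arXiv:2109.05227 — 2 statements merged into one kernel-verified Lean document; each statement's English description precedes it below -/
import Mathlib

section
/- Let {q̂_i}_{i∈I} and {q_i}_{i∈I} each be orthonormal families in ℝ^p with ∑_{i∈I} q̂_i q̂_i^⊤ = ∑_{i∈I} q_i q_i^⊤, and let c_i ≥ 0 for all i. Then ‖∑_{i∈I} c_i (q̂_i q̂_i^⊤ − q_i q_i^⊤)‖_F² ≤ ∑_{i∈I} c_i² ‖q̂_i q̂_i^⊤ − q_i q_i^⊤‖_F², since the cross terms tr[(q̂_i q̂_i^⊤ − q_i q_i^⊤)(q̂_j q̂_j^⊤ − q_j q_j^⊤)] = −(q̂_i^⊤q_j)² − (q_i^⊤q̂_j)² ≤ 0 for i ≠ j. -/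
/-!
Write `D i = q̂ᵢ q̂ᵢᵀ - qᵢ qᵢᵀ`. Expanding the square in the Frobenius inner product, the left side
is `∑ i, ∑ j, cᵢ cⱼ ⟨D i, D j⟩`. For `i ≠ j` orthonormality kills `(q̂ᵢ ⬝ q̂ⱼ)²` and `(qᵢ ⬝ qⱼ)²`,
leaving `⟨D i, D j⟩ = -(q̂ᵢ ⬝ qⱼ)² - (qᵢ ⬝ q̂ⱼ)² ≤ 0`; since `c ≥ 0`, dropping these cross terms
can only increase the sum.
-/

open Matrix

namespace LinearMap.BilinForm

variable {R M ι : Type*} [CommRing R] [AddCommGroup M] [Module R M]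

theorem apply_sum_smul_sum_smul (B : LinearMap.BilinForm R M) (s : Finset ι) (c : ι → R)
    (v : ι → M) :
    B (∑ i ∈ s, c i • v i) (∑ j ∈ s, c j • v j) =
      ∑ i ∈ s, ∑ j ∈ s, c i * c j * B (v i) (v j) := by
  simp only [map_sum, map_smul, LinearMap.sum_apply, LinearMap.smul_apply, smul_eq_mul,
    Finset.mul_sum]
  rw [Finset.sum_comm]
  exact Finset.sum_congr rfl fun i _ => Finset.sum_congr rfl fun j _ => by ring

theorem apply_sum_smul_self_le [PartialOrder R] [IsOrderedRing R] [DecidableEq ι]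
    (B : LinearMap.BilinForm R M) (s : Finset ι) {c : ι → R} {v : ι → M} (hc : ∀ i ∈ s, 0 ≤ c i)
    (hB : ∀ i ∈ s, ∀ j ∈ s, i ≠ j → B (v i) (v j) ≤ 0) :
    B (∑ i ∈ s, c i • v i) (∑ i ∈ s, c i • v i) ≤ ∑ i ∈ s, c i ^ 2 * B (v i) (v i) := by
  rw [apply_sum_smul_sum_smul]
  refine Finset.sum_le_sum fun i hi => ?_
  rw [← Finset.add_sum_erase s _ hi, sq]
  have hoff : ∑ j ∈ s.erase i, c i * c j * B (v i) (v j) ≤ 0 := by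
    refine Finset.sum_nonpos fun j hj => ?_
    have hjs := Finset.mem_of_mem_erase hj
    exact mul_nonpos_of_nonneg_of_nonpos (mul_nonneg (hc i hi) (hc j hjs))
      (hB i hi j hjs (Finset.ne_of_mem_erase hj).symm)
  exact add_le_of_nonpos_right hoff

end LinearMap.BilinForm

namespace Matrix

variable {R m n : Type*} [CommRing R] [Fintype m] [Fintype n]

def frobeniusForm : LinearMap.BilinForm R (Matrix m n R) :=
  LinearMap.mk₂ R (fun A B => ∑ a, ∑ b, A a b * B a b)
    (fun A A' B => by simp only [add_apply, add_mul, Finset.sum_add_distrib])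
    (fun r A B => by simp only [smul_apply, smul_eq_mul, mul_assoc, Finset.mul_sum])
    (fun A B B' => by simp only [add_apply, mul_add, Finset.sum_add_distrib])
    (fun r A B => by simp only [smul_apply, smul_eq_mul, mul_left_comm, Finset.mul_sum])

theorem frobeniusForm_apply (A B : Matrix m n R) :
    frobeniusForm A B = ∑ a, ∑ b, A a b * B a b := rfl

theorem frobeniusForm_vecMulVec (u x : m → R) (v y : n → R) :
    frobeniusForm (vecMulVec u v) (vecMulVec x y) = (u ⬝ᵥ x) * (v ⬝ᵥ y) := by
  simp only [frobeniusForm_apply, vecMulVec_apply, dotProduct, Finset.sum_mul_sum]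
  exact Finset.sum_congr rfl fun a _ => Finset.sum_congr rfl fun b _ => by ring

theorem frobeniusForm_vecMulVec_sub_vecMulVec (u v x y : m → R) (hux : u ⬝ᵥ x = 0)
    (hvy : v ⬝ᵥ y = 0) :
    frobeniusForm (vecMulVec u u - vecMulVec v v) (vecMulVec x x - vecMulVec y y) =
      -((u ⬝ᵥ y) ^ 2 + (v ⬝ᵥ x) ^ 2) := by
  simp only [map_sub, LinearMap.sub_apply, frobeniusForm_vecMulVec, hux, hvy]
  ring

end Matrix

theorem frobenius_sq_sum_proj_diff_le_general {I : Type*} [Fintype I] [DecidableEq I] (p : ℕ)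
    (q qh : I → Fin p → ℝ) (c : I → ℝ) (hc : ∀ i, 0 ≤ c i)
    (hq : ∀ i j : I, q i ⬝ᵥ q j = if i = j then 1 else 0)
    (hqh : ∀ i j : I, qh i ⬝ᵥ qh j = if i = j then 1 else 0) :
    (∑ a : Fin p, ∑ b : Fin p,
        ((∑ i : I, c i • (vecMulVec (qh i) (qh i) - vecMulVec (q i) (q i))) a b) ^ 2) ≤
      ∑ i : I, (c i) ^ 2 *
        ∑ a : Fin p, ∑ b : Fin p,
          ((vecMulVec (qh i) (qh i) - vecMulVec (q i) (q i)) a b) ^ 2 := by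
  have hcross : ∀ i j, i ≠ j → frobeniusForm (vecMulVec (qh i) (qh i) - vecMulVec (q i) (q i))
      (vecMulVec (qh j) (qh j) - vecMulVec (q j) (q j)) ≤ 0 := fun i j hij => by
    rw [frobeniusForm_vecMulVec_sub_vecMulVec _ _ _ _ (by simp [hqh, hij]) (by simp [hq, hij])]
    exact neg_nonpos.mpr (by positivity)
  simpa only [frobeniusForm_apply, sq] using
    frobeniusForm.apply_sum_smul_self_le Finset.univ (fun i _ => hc i)
      fun i _ j _ => hcross i j

theorem frobenius_sq_sum_proj_diff_le {I : Type*} [Fintype I] [DecidableEq I] (p : ℕ)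
    (q qh : I → Fin p → ℝ) (c : I → ℝ) (hc : ∀ i, 0 ≤ c i)
    (hq : ∀ i j : I, q i ⬝ᵥ q j = if i = j then 1 else 0)
    (hqh : ∀ i j : I, qh i ⬝ᵥ qh j = if i = j then 1 else 0)
    (hproj : ∑ i : I, vecMulVec (qh i) (qh i) = ∑ i : I, vecMulVec (q i) (q i)) :
    (∑ a : Fin p, ∑ b : Fin p,
        ((∑ i : I, c i • (vecMulVec (qh i) (qh i) - vecMulVec (q i) (q i))) a b) ^ 2) ≤
      ∑ i : I, (c i) ^ 2 *
        ∑ a : Fin p, ∑ b : Fin p,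
          ((vecMulVec (qh i) (qh i) - vecMulVec (q i) (q i)) a b) ^ 2 :=
  frobenius_sq_sum_proj_diff_le_general p q qh c hc hq hqh
end

section
/- Let λ : [0, ∞) → ℝ be continuous with, on each interval [d−1, d] for integer d, λ(t) = (1 − t + (d−1))λ(d−1) + ζ ∫_{d−1}^t λ(s) ds + (t − (d−1))·a (the scalar h = 1, noise-free FIVAR-Itô interpolation with scalar parameter ζ, |ζ| < 1). Then the integrated value ξ_d = ∫_{d−1}^{d} λ(t) dt satisfies the affine recursion ξ_d = π₁ a + (π₁ − π₂) ζ ξ_{d−1}, where π₁ = ζ^{−1}(e^{ζ} − 1) and π₂ = ζ^{−2}(e^{ζ} − 1 − ζ). -/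
open intervalIntegral

theorem scalar_fivar_recursion (lam : ℝ → ℝ) (hlam : Continuous lam)
    (ζ a : ℝ) (hζ0 : ζ ≠ 0) (hζ : |ζ| < 1)
    (hstruct : ∀ d : ℕ, 1 ≤ d → ∀ t ∈ Set.Icc ((d : ℝ) - 1) (d : ℝ),
      lam t = ((d : ℝ) - t) * lam ((d : ℝ) - 1) +
        ζ * (∫ s in ((d : ℝ) - 1)..t, lam s) + (t - ((d : ℝ) - 1)) * a) :
    ∀ d : ℕ, 2 ≤ d →
      (∫ t in ((d : ℝ) - 1)..(d : ℝ), lam t) =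
        ζ⁻¹ * (Real.exp ζ - 1) * a +
          (ζ⁻¹ * (Real.exp ζ - 1) - ζ⁻¹ ^ 2 * (Real.exp ζ - 1 - ζ)) * ζ *
            ∫ t in ((d : ℝ) - 2)..((d : ℝ) - 1), lam t := by
  intro d hd
  set c : ℝ := (d : ℝ) - 1 with hc
  have hd1 : (1:ℝ) ≤ (d:ℝ) := by exact_mod_cast Nat.one_le_of_lt hd
  -- Step 1: lam c = ζ * (∫_{c-1}^c lam) + a
  have hI : lam c = ζ * (∫ t in ((d:ℝ)-2)..c, lam t) + a := by
    have h1 : (1:ℕ) ≤ d - 1 := by omega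
    have hcast : ((d-1:ℕ):ℝ) = c := by
      push_cast [Nat.cast_sub (by omega : 1 ≤ d)]; ring
    have := hstruct (d-1) h1 ((d-1:ℕ):ℝ) ⟨by linarith [hcast ▸ (le_refl c)], le_refl _⟩
    rw [hcast] at this
    have h2 : (d:ℝ) - 2 = c - 1 := by rw [hc]; ring
    rw [h2, this]; ring
  -- abbreviations
  set lam0 : ℝ := lam c with hl0
  set m : ℝ := (lam0 - a) / ζ with hm
  set n : ℝ := (lam0 - a - ζ * lam0) / ζ^2 with hn
  set G : ℝ → ℝ := fun t => -n * Real.exp (ζ * (t - c)) + m * (t - c) + n with hG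
  set F : ℝ → ℝ := fun t => ∫ s in c..t, lam s with hF
  -- derivative facts
  have hFd : ∀ t : ℝ, HasDerivAt F (lam t) t := by
    intro t
    exact intervalIntegral.integral_hasDerivAt_right (hlam.intervalIntegrable c t)
      (hlam.stronglyMeasurableAtFilter _ _) hlam.continuousAt
  have hGd : ∀ t : ℝ, HasDerivAt G (ζ * G t + (c + 1 - t) * lam0 + (t - c) * a) t := by
    intro t
    have h1 : HasDerivAt (fun t : ℝ => Real.exp (ζ * (t - c))) (ζ * Real.exp (ζ * (t - c))) t := by
      have := (Real.hasDerivAt_exp (ζ * (t - c))).comp t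
        (((hasDerivAt_id t).sub_const c).const_mul ζ)
      simpa [mul_comm, Function.comp_def] using this
    have h2 : HasDerivAt G (-n * (ζ * Real.exp (ζ * (t - c))) + m) t := by
      simpa [hG, neg_mul] using ((h1.const_mul (-n)).add
        (((hasDerivAt_id t).sub_const c).const_mul m)).add_const n
    convert h2 using 1
    simp only [hG, hm, hn]
    field_simp
    ring
  -- the auxiliary function H
  set H : ℝ → ℝ := fun t => Real.exp (-(ζ * t)) * (F t - G t) with hH
  have hHd : ∀ t ∈ Set.Icc c ((d:ℝ)), HasDerivAt H 0 t := by
    intro t ht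
    have hlamt : lam t = ζ * F t + ((c + 1 - t) * lam0 + (t - c) * a) := by
      have := hstruct d (by omega) t ht
      rw [this]; simp only [hF, hc, hl0]; ring
    have he : HasDerivAt (fun t : ℝ => Real.exp (-(ζ * t))) (-ζ * Real.exp (-(ζ * t))) t := by
      have := (Real.hasDerivAt_exp (-(ζ * t))).comp t (((hasDerivAt_id t).const_mul ζ).neg)
      simpa [mul_comm, Function.comp_def, Pi.neg_apply] using this
    have := he.mul ((hFd t).sub (hGd t))
    refine this.congr_deriv ?_
    rw [hlamt, Pi.sub_apply]
    ring
  have hconst : H ((d:ℝ)) = H c := by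
    have hcd : c ≤ (d:ℝ) := by rw [hc]; linarith
    have := constant_of_has_deriv_right_zero
      (f := H) (a := c) (b := (d:ℝ))
      (HasDerivAt.continuousOn (fun t ht => hHd t ht))
      (fun t ht => (hHd t (Set.mem_Icc.mpr ⟨ht.1, le_of_lt ht.2⟩)).hasDerivWithinAt)
    exact this ((d:ℝ)) (Set.mem_Icc.mpr ⟨hcd, le_refl _⟩)
  -- H c = 0 since F c = 0 and G c = 0
  have hHc : H c = 0 := by
    simp [hH, hF, hG]
  have hFG : F ((d:ℝ)) = G ((d:ℝ)) := by
    have h := hconst.trans hHc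
    have hex : Real.exp (-(ζ * (d:ℝ))) ≠ 0 := Real.exp_ne_zero _
    have := mul_eq_zero.mp h
    rcases this with h' | h'
    · exact absurd h' hex
    · linarith [sub_eq_zero.mp h']
  -- conclude
  have hdc : (d:ℝ) - c = 1 := by rw [hc]; ring
  have hGval : G ((d:ℝ)) = -n * Real.exp ζ + m + n := by
    simp only [hG, hdc, mul_one]
  have hFval : (∫ t in ((d:ℝ)-1)..(d:ℝ), lam t) = F ((d:ℝ)) := by
    rw [hF, hc]
  rw [hFval, hFG, hGval]
  -- substitute lam0 = ζ * I + a and finish with algebra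
  set I : ℝ := ∫ t in ((d:ℝ)-2)..c, lam t with hIdef
  rw [hn, hm, hI]
  field_simp
  ring
end
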